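/- arXiv:2305.16168 — 4 statements merged into one kernel-verified Lean document; each statement's English description precedes it below -/
import Mathlib

section
/- If (X,f) is a dynamical system with X a compact metric space and (X,f) has the specification property, then (X,f) has the infinite specification property. -/
/-!
For fixed orbit segments, the points that `ε`-trace the first `n` of them (with non-strict
inequalities) form a decreasing sequence of closed sets, nonempty by the finite specification
property. By compactness their intersection is nonempty, and a point in it traces every segment.
Applying this with `ε = δ / 2` turns the non-strict bound back into the strict one.
-/

/-- The (finite) specification property. -/
def SpecificationProperty {X : Type*} [MetricSpace X] (f : X → X) : Prop :=
  ∀ δ : ℝ, 0 < δ → ∃ N : ℕ, ∀ n : ℕ, ∀ x : Fin n → X, ∀ a b : Fin n → ℕ,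
    (∀ i : Fin n, a i ≤ b i) →
    (∀ i j : Fin n, (i : ℕ) + 1 = (j : ℕ) → b i + N ≤ a j) →
    ∃ p : X, ∀ i : Fin n, ∀ j : ℕ, a i ≤ j → j ≤ b i →
      dist (f^[j] p) (f^[j] (x i)) < δ

/-- The infinite specification property. -/
def InfiniteSpecificationProperty {X : Type*} [MetricSpace X] (f : X → X) : Prop :=
  ∀ δ : ℝ, 0 < δ → ∃ N : ℕ, ∀ x : ℕ → X, ∀ a b : ℕ → ℕ,
    (∀ i : ℕ, a i ≤ b i) →
    (∀ i : ℕ, b i + N ≤ a (i + 1)) →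
    ∃ p : X, ∀ i : ℕ, ∀ j : ℕ, a i ≤ j → j ≤ b i →
      dist (f^[j] p) (f^[j] (x i)) < δ

section Tracing

variable {X : Type*} [MetricSpace X]

def tracingSet (f : X → X) (x : ℕ → X) (a b : ℕ → ℕ) (ε : ℝ) (n : ℕ) : Set X :=
  {p | ∀ i < n, ∀ j, a i ≤ j → j ≤ b i → dist (f^[j] p) (f^[j] (x i)) ≤ ε}

variable {f : X → X} {x : ℕ → X} {a b : ℕ → ℕ} {ε : ℝ}

theorem isClosed_tracingSet (hf : Continuous f) (n : ℕ) : IsClosed (tracingSet f x a b ε n) := by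
  simp only [tracingSet, Set.ofPred_forall]
  exact isClosed_iInter fun i => isClosed_iInter fun _ => isClosed_iInter fun j =>
    isClosed_iInter fun _ => isClosed_iInter fun _ =>
      isClosed_le ((hf.iterate j).dist continuous_const) continuous_const

theorem tracingSet_antitone : Antitone (tracingSet f x a b ε) :=
  fun _ _ hmn _ hp i hi => hp i (hi.trans_le hmn)

theorem SpecificationProperty.tracingSet_nonempty (h : SpecificationProperty f) (hε : 0 < ε) :
    ∃ N : ℕ, ∀ (x : ℕ → X) (a b : ℕ → ℕ), (∀ i, a i ≤ b i) → (∀ i, b i + N ≤ a (i + 1)) →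
      ∀ n, (tracingSet f x a b ε n).Nonempty := by
  obtain ⟨N, hN⟩ := h ε hε
  refine ⟨N, fun x a b hab hgap n => ?_⟩
  obtain ⟨p, hp⟩ := hN n (fun i => x i) (fun i => a i) (fun i => b i) (fun i => hab i)
    fun i k hik => hik ▸ hgap i
  exact ⟨p, fun i hi j hj hj' => (hp ⟨i, hi⟩ j hj hj').le⟩

end Tracing

theorem sp_implies_isp_of_compact_general {X : Type*} [MetricSpace X] [CompactSpace X] (f : X → X)
    (hf : Continuous f)
    (h : SpecificationProperty f) : InfiniteSpecificationProperty f := by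
  intro δ hδ
  obtain ⟨N, hN⟩ := h.tracingSet_nonempty (half_pos hδ)
  refine ⟨N, fun x a b hab hgap => ?_⟩
  obtain ⟨p, hp⟩ := IsCompact.nonempty_iInter_of_sequence_nonempty_isCompact_isClosed
    (tracingSet f x a b (δ / 2)) (fun n => tracingSet_antitone n.le_succ) (hN x a b hab hgap)
    (isClosed_tracingSet hf 0).isCompact (isClosed_tracingSet hf)
  refine ⟨p, fun i j hj hj' => ?_⟩
  have hpi := Set.mem_iInter.1 hp (i + 1) i i.lt_succ_self j hj hj'
  linarith

theorem sp_implies_isp_of_compact {X : Type*} [MetricSpace X] [CompactSpace X] (f : X → X)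
    (hf : Continuous f) (hsurj : Function.Surjective f)
    (h : SpecificationProperty f) : InfiniteSpecificationProperty f :=
  sp_implies_isp_of_compact_general f hf h
end

section
/- Let a_i = i(N+P) and b_i = a_i + P for fixed naturals N, P, and define E_β = { x ∈ X : for all i and a_i ≤ j ≤ b_i, d(f^j(x), f^{j−a_i}(t_{β_i})) ≤ ε/2 }, where d(Orb(t_0), Orb(t_1)) > 2ε. If β ∈ {0,1}^ω is not periodic (under the shift), then E_β contains no periodic points of f. -/
/-!
A periodic point `q` of period `K` returns to itself after `K` blocks, so the points
`f^[i(N+P)] q` and `f^[(i+K)(N+P)] q` coincide. That point lies within `ε/2` of both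
`t (β i)` and `t (β (i+K))`, while `t false` and `t true` are more than `2ε` apart;
hence `β (i+K) = β i` for every `i`, and `β` would be periodic.
-/

open Function

theorem lt_dist_of_lt_iInf_iInf {X ι κ : Type*} [PseudoMetricSpace X] {u : ι → X} {v : κ → X}
    {c : ℝ} (h : c < ⨅ i, ⨅ j, dist (u i) (v j)) (i : ι) (j : κ) : c < dist (u i) (v j) := by
  have hbdd : ∀ i, BddBelow (Set.range fun j => dist (u i) (v j)) :=
    fun i => ⟨0, by rintro _ ⟨j, rfl⟩; exact dist_nonneg⟩
  have hbdd₂ : BddBelow (Set.range fun i => ⨅ j, dist (u i) (v j)) :=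
    ⟨0, by rintro _ ⟨i, rfl⟩; exact Real.iInf_nonneg fun j => dist_nonneg⟩
  calc c < ⨅ i, ⨅ j, dist (u i) (v j) := h
    _ ≤ ⨅ j, dist (u i) (v j) := ciInf_le hbdd₂ i
    _ ≤ dist (u i) (v j) := ciInf_le (hbdd i) j

theorem Bool.two_mul_lt_dist_of_ne {X : Type*} [PseudoMetricSpace X] {t : Bool → X} {δ : ℝ}
    (ht : 2 * δ < dist (t false) (t true)) {a b : Bool} (hab : a ≠ b) :
    2 * δ < dist (t a) (t b) := by
  cases a <;> cases b <;> first | exact absurd rfl hab | exact ht | rwa [dist_comm]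

theorem eq_of_dist_le_of_two_mul_lt_dist {X α : Type*} [PseudoMetricSpace X] {t : α → X}
    {δ : ℝ} (ht : ∀ a b, a ≠ b → 2 * δ < dist (t a) (t b)) {x : X} {a b : α}
    (ha : dist x (t a) ≤ δ) (hb : dist x (t b) ≤ δ) : a = b := by
  by_contra hab
  have := dist_triangle_left (t a) (t b) x
  linarith [ht a b hab]

theorem Function.IsPeriodicPt.iterate_add_mul_mul {X : Type*} {f : X → X} {K : ℕ} {q : X}
    (hq : IsPeriodicPt f K q) (i L : ℕ) : f^[(i + K) * L] q = f^[i * L] q := by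
  rw [add_mul, iterate_add_apply, (hq.mul_const L).eq]

theorem periodic_of_shadowing_periodicPt {X α : Type*} [PseudoMetricSpace X] {f : X → X}
    {t : α → X} {δ : ℝ} (ht : ∀ a b, a ≠ b → 2 * δ < dist (t a) (t b)) {β : ℕ → α} {L K : ℕ}
    {q : X} (hq : IsPeriodicPt f K q) (hβ : ∀ i, dist (f^[i * L] q) (t (β i)) ≤ δ) (i : ℕ) :
    β (i + K) = β i := by
  refine eq_of_dist_le_of_two_mul_lt_dist ht (x := f^[i * L] q) ?_ (hβ i)
  rw [← hq.iterate_add_mul_mul]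
  exact hβ (i + K)

theorem E_beta_no_periodic_points_general {X : Type*} [MetricSpace X] (f : X → X)
    (t : Bool → X) (ε : ℝ) (N P : ℕ)
    (horb : 2 * ε < ⨅ m : ℕ, ⨅ n : ℕ, dist (f^[m] (t false)) (f^[n] (t true)))
    (β : ℕ → Bool) (hβ : ¬ ∃ m : ℕ, 1 ≤ m ∧ ∀ i : ℕ, β (i + m) = β i)
    (q : X)
    (hq : ∀ i : ℕ, ∀ j : ℕ, i * (N + P) ≤ j → j ≤ i * (N + P) + P →
      dist (f^[j] q) (f^[j - i * (N + P)] (t (β i))) ≤ ε / 2) :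
    ¬ ∃ K : ℕ, 1 ≤ K ∧ f^[K] q = q := by
  rintro ⟨K, hK, hKq⟩
  have hsep : 2 * (ε / 2) < dist (t false) (t true) := by
    have h₀ := lt_dist_of_lt_iInf_iInf horb 0 0
    rw [iterate_zero_apply, iterate_zero_apply] at h₀
    linarith [dist_nonneg (x := t false) (y := t true)]
  have hblock : ∀ i, dist (f^[i * (N + P)] q) (t (β i)) ≤ ε / 2 := fun i => by
    simpa using hq i (i * (N + P)) le_rfl (Nat.le_add_right _ _)
  exact hβ ⟨K, hK, periodic_of_shadowing_periodicPt
    (fun _ _ => Bool.two_mul_lt_dist_of_ne hsep) hKq hblock⟩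

theorem E_beta_no_periodic_points {X : Type*} [MetricSpace X] (f : X → X)
    (t : Bool → X) (ε : ℝ) (hε : 0 < ε) (N P : ℕ)
    (horb : 2 * ε < ⨅ m : ℕ, ⨅ n : ℕ, dist (f^[m] (t false)) (f^[n] (t true)))
    (β : ℕ → Bool) (hβ : ¬ ∃ m : ℕ, 1 ≤ m ∧ ∀ i : ℕ, β (i + m) = β i)
    (q : X)
    (hq : ∀ i : ℕ, ∀ j : ℕ, i * (N + P) ≤ j → j ≤ i * (N + P) + P →
      dist (f^[j] q) (f^[j - i * (N + P)] (t (β i))) ≤ ε / 2) :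
    ¬ ∃ K : ℕ, 1 ≤ K ∧ f^[K] q = q :=
  E_beta_no_periodic_points_general f t ε N P horb β hβ q hq
end

section
/- In {0,1}^ω with the shift, there exists an uncountable set W of non-periodic points whose orbits are pairwise disjoint and each of whose ω-limit sets is uncountable. -/
/-- The shift map on binary sequences. -/
def shiftMap (x : ℕ → Bool) : ℕ → Bool := fun n => x (n + 1)

/-- The ω-limit set of a binary sequence under the shift. -/
def omegaLimitShift (x : ℕ → Bool) : Set (ℕ → Bool) :=
  ⋂ n : ℕ, closure { y | ∃ i : ℕ, n ≤ i ∧ shiftMap^[i] x = y }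

/-- The orbit of a binary sequence under the shift. -/
def orbit (x : ℕ → Bool) : Set (ℕ → Bool) := { y | ∃ n : ℕ, shiftMap^[n] x = y }

lemma shift_iter (x : ℕ → Bool) (i : ℕ) : shiftMap^[i] x = fun m => x (m + i) := by
  induction i generalizing x with
  | zero => rfl
  | succ i ih =>
    rw [Function.iterate_succ_apply, ih]
    funext m
    rfl

lemma not_countable_funs : ¬ Countable (ℕ → Bool) := by
  intro h
  obtain ⟨f, hf⟩ := exists_surjective_nat (ℕ → Bool)
  obtain ⟨n, hn⟩ := hf (fun n => ! f n n)
  have := congrFun hn n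
  simp at this

/-- A point is "universal" if every finite word occurs at arbitrarily large positions. -/
def Univw (x : ℕ → Bool) : Prop :=
  ∀ (w : List Bool) (N : ℕ), ∃ i, N ≤ i ∧ ∀ j < w.length, x (i + j) = w.getD j false

lemma omega_univ {x : ℕ → Bool} (hx : Univw x) : omegaLimitShift x = Set.univ := by
  ext y
  simp only [Set.mem_univ, iff_true, omegaLimitShift, Set.mem_iInter]
  intro n
  have h : ∀ k : ℕ, ∃ i, n ≤ i ∧ ∀ j < k, x (i + j) = y j := by
    intro k
    obtain ⟨i, hi, hw⟩ := hx (List.ofFn fun j : Fin k => y j) n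
    refine ⟨i, hi, fun j hj => ?_⟩
    have hj' : j < (List.ofFn fun j : Fin k => y j).length := by simpa using hj
    rw [hw j hj', List.getD_eq_getElem _ _ hj', List.getElem_ofFn]
  choose I hI1 hI2 using h
  have hmem : ∀ k, shiftMap^[I k] x ∈ { y | ∃ i : ℕ, n ≤ i ∧ shiftMap^[i] x = y } :=
    fun k => ⟨I k, hI1 k, rfl⟩
  have htend : Filter.Tendsto (fun k => shiftMap^[I k] x) Filter.atTop (nhds y) := by
    rw [tendsto_pi_nhds]
    intro j
    apply tendsto_const_nhds.congr'
    filter_upwards [Filter.eventually_ge_atTop (j + 1)] with k hk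
    rw [shift_iter]
    show y j = x (j + I k)
    rw [Nat.add_comm, hI2 k j (by omega)]
  exact mem_closure_of_tendsto htend (Filter.Eventually.of_forall hmem)

/-- enumeration of words used to fill gaps -/
def wordAt (k : ℕ) : List Bool :=
  (Encodable.decode (α := List Bool) (Nat.unpair k).1).getD []

/-- The point coding `α` at square positions, with all finite words occurring in the gaps. -/
def xseq (α : ℕ → Bool) : ℕ → Bool := fun n =>
  if n.sqrt * n.sqrt = n then α n.sqrt
  else (wordAt n.sqrt).getD (n - n.sqrt * n.sqrt - 1) false

lemma sqrt_sq (k : ℕ) : Nat.sqrt (k * k) = k := by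
  rw [← Nat.pow_two]; exact Nat.sqrt_eq' k

lemma xseq_injective : Function.Injective xseq := by
  intro α β h
  funext k
  have := congrFun h (k * k)
  simpa [xseq, sqrt_sq] using this

lemma sqrt_eq_of {k n : ℕ} (h1 : k * k ≤ n) (h2 : n < (k + 1) * (k + 1)) :
    Nat.sqrt n = k := by
  refine le_antisymm ?_ ?_
  · have := Nat.sqrt_lt'.2 (show n < (k+1)^2 by rwa [Nat.pow_two])
    omega
  · calc k = Nat.sqrt (k * k) := (sqrt_sq k).symm
    _ ≤ Nat.sqrt n := Nat.sqrt_le_sqrt h1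

lemma xseq_univ (α : ℕ → Bool) : Univw (xseq α) := by
  intro w N
  set k := Nat.pair (Encodable.encode w) (max (max N w.length) 1) with hk
  have hk2 : max (max N w.length) 1 ≤ k := Nat.right_le_pair _ _
  have hkN : N ≤ k := by omega
  have hkw : w.length ≤ k := by omega
  have hk1 : 1 ≤ k := by omega
  have hword : wordAt k = w := by
    simp [wordAt, hk, Nat.unpair_pair, Encodable.encodek]
  have hkk : k ≤ k * k := Nat.le_mul_of_pos_left k hk1
  refine ⟨k * k + 1, by omega, fun j hj => ?_⟩
  have hsq : Nat.sqrt (k * k + 1 + j) = k := by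
    apply sqrt_eq_of (by omega)
    have : (k + 1) * (k + 1) = k * k + 2 * k + 1 := by ring
    omega
  have hne : ¬ (Nat.sqrt (k*k+1+j) * Nat.sqrt (k*k+1+j) = k*k+1+j) := by
    rw [hsq]; omega
  rw [xseq, if_neg hne, hsq, hword]
  congr 1
  omega

/-- grand orbit equivalence -/
def Erel (x y : ℕ → Bool) : Prop := ∃ m n, shiftMap^[m] x = shiftMap^[n] y

lemma Erel_equiv : Equivalence Erel := by
  constructor
  · exact fun x => ⟨0, 0, rfl⟩
  · rintro x y ⟨m, n, h⟩; exact ⟨n, m, h.symm⟩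
  · rintro x y z ⟨m, n, h1⟩ ⟨p, q, h2⟩
    refine ⟨p + m, n + q, ?_⟩
    rw [Function.iterate_add_apply, h1, ← Function.iterate_add_apply,
      Nat.add_comm p n, Function.iterate_add_apply, h2, ← Function.iterate_add_apply]

def shiftSetoid : Setoid (ℕ → Bool) := ⟨Erel, Erel_equiv⟩

lemma countable_class (x : ℕ → Bool) : {y | Erel x y}.Countable := by
  have hsub : {y | Erel x y} ⊆ ⋃ p : ℕ × ℕ,
      Set.range (fun v : (Fin p.2 → Bool) =>
        (fun j => if h : j < p.2 then v ⟨j, h⟩ else (shiftMap^[p.1] x) (j - p.2) : ℕ → Bool)) := by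
    rintro y ⟨m, n, hmn⟩
    refine Set.mem_iUnion.2 ⟨(m, n), ⟨fun i => y i, ?_⟩⟩
    funext j
    by_cases h : j < n
    · simp [h]
    · simp only [h, dif_neg, not_false_iff]
      rw [hmn, shift_iter]
      show y (j - n + n) = y j
      congr 1
      omega
  exact Set.Countable.mono hsub (Set.countable_iUnion fun p => Set.countable_range _)

lemma periodic_omega_countable {β : ℕ → Bool} {m : ℕ} (hm : 1 ≤ m)
    (hβ : shiftMap^[m] β = β) : (omegaLimitShift β).Countable := by
  have hmod : ∀ n, shiftMap^[n] β = shiftMap^[n % m] β := by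
    intro n
    induction n using Nat.strong_induction_on with
    | _ n ih =>
      by_cases h : n < m
      · rw [Nat.mod_eq_of_lt h]
      · push_neg at h
        have h1 : n = (n - m) + m := by omega
        rw [Nat.mod_eq_sub_mod h, ← ih (n - m) (by omega)]
        conv_lhs => rw [h1]
        rw [Function.iterate_add_apply, hβ]
  have horb : { y | ∃ i : ℕ, 0 ≤ i ∧ shiftMap^[i] β = y } ⊆
      (fun j => shiftMap^[j] β) '' (Set.Iio m) := by
    rintro y ⟨i, -, rfl⟩
    exact ⟨i % m, Nat.mod_lt _ (by omega), (hmod i).symm⟩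
  have hfin : ((fun j => shiftMap^[j] β) '' (Set.Iio m)).Finite :=
    (Set.finite_Iio m).image _
  have hcl : closure { y | ∃ i : ℕ, 0 ≤ i ∧ shiftMap^[i] β = y } ⊆
      (fun j => shiftMap^[j] β) '' (Set.Iio m) :=
    closure_minimal horb hfin.isClosed
  have : omegaLimitShift β ⊆ (fun j => shiftMap^[j] β) '' (Set.Iio m) := by
    intro y hy
    exact hcl (Set.mem_iInter.1 hy 0)
  exact (hfin.countable).mono this

lemma Erel_univw {x y : ℕ → Bool} (h : Erel x y) (hx : Univw x) : Univw y := by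
  obtain ⟨m, n, hmn⟩ := h
  intro w N
  obtain ⟨i, hi, hw⟩ := hx w (m + N)
  refine ⟨n + (i - m), by omega, fun j hj => ?_⟩
  have h1 : y (n + (i - m) + j) = (shiftMap^[n] y) ((i - m) + j) := by
    rw [shift_iter]; congr 1; omega
  rw [h1, ← hmn, shift_iter]
  show x (i - m + j + m) = w.getD j false
  rw [show i - m + j + m = i + j by omega]
  exact hw j hj

theorem exists_uncountable_aperiodic_family :
    ∃ W : Set (ℕ → Bool), ¬ W.Countable ∧
      (∀ β ∈ W, ¬ ∃ m : ℕ, 1 ≤ m ∧ shiftMap^[m] β = β) ∧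
      (∀ β ∈ W, ∀ γ ∈ W, β ≠ γ → orbit β ∩ orbit γ = ∅) ∧
      (∀ β ∈ W, ¬ (omegaLimitShift β).Countable) := by
  classical
  set T : Set (ℕ → Bool) := {x | Univw x} with hT
  set q : (ℕ → Bool) → Quotient shiftSetoid := Quotient.mk shiftSetoid with hq
  set W : Set (ℕ → Bool) := Quotient.out '' (q '' T) with hW
  have hqe : ∀ x y, q x = q y ↔ Erel x y := by
    intro x y
    constructor
    · intro h; exact Quotient.exact h
    · intro h; exact Quotient.sound h
  -- every member of W is universal
  have hWuniv : ∀ β ∈ W, Univw β := by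
    rintro β ⟨c, ⟨x, hx, rfl⟩, rfl⟩
    have : q (Quotient.out (q x)) = q x := Quotient.out_eq _
    exact Erel_univw (Erel_equiv.symm ((hqe _ _).1 this)) hx
  -- omega limit sets are uncountable
  have hWomega : ∀ β ∈ W, ¬ (omegaLimitShift β).Countable := by
    intro β hβ hcnt
    rw [omega_univ (hWuniv β hβ), Set.countable_univ_iff] at hcnt
    exact not_countable_funs hcnt
  -- T is not countable
  have hTnc : ¬ T.Countable := by
    intro h
    have hr : (Set.range xseq).Countable := by
      apply h.mono
      rintro _ ⟨α, rfl⟩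
      exact xseq_univ α
    have : Countable (Set.range xseq) := hr.to_subtype
    have : Countable (ℕ → Bool) :=
      Countable.of_equiv _ (Equiv.ofInjective xseq xseq_injective).symm
    exact not_countable_funs this
  -- image of T in the quotient is not countable
  have hqTnc : ¬ (q '' T).Countable := by
    intro h
    apply hTnc
    have : T ⊆ ⋃ c ∈ q '' T, {y | Erel (Quotient.out c) y} := by
      intro x hx
      refine Set.mem_biUnion (Set.mem_image_of_mem q hx) ?_
      have : q (Quotient.out (q x)) = q x := Quotient.out_eq _
      exact (hqe _ _).1 this
    exact (h.biUnion fun c _ => countable_class _).mono this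
  refine ⟨W, ?_, ?_, ?_, hWomega⟩
  · -- W not countable
    intro h
    apply hqTnc
    have hsub : q '' T ⊆ Quotient.out ⁻¹' W := Set.subset_preimage_image _ _
    exact (h.preimage Quotient.out_injective).mono hsub
  · -- no periodic points
    intro β hβ ⟨m, hm, hper⟩
    exact hWomega β hβ (periodic_omega_countable hm hper)
  · -- disjoint orbits
    rintro β hβ γ hγ hne
    obtain ⟨c₁, hc₁, rfl⟩ := hβ
    obtain ⟨c₂, hc₂, rfl⟩ := hγ
    ext z
    simp only [Set.mem_inter_iff, Set.mem_empty_iff_false, iff_false]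
    rintro ⟨⟨a, ha⟩, ⟨b, hb⟩⟩
    apply hne
    have hE : Erel (Quotient.out c₁) (Quotient.out c₂) := ⟨a, b, ha.trans hb.symm⟩
    have : c₁ = c₂ := by
      rw [← Quotient.out_eq c₁, ← Quotient.out_eq c₂]
      exact Quotient.sound hE
    rw [this]
end

section
/- The full shift ({0,1}^ω, σ) exhibits dense ω-chaos: every nonempty open subset of {0,1}^ω contains an uncountable ω-scrambled set. -/
/-- A set is ω-scrambled for the shift. -/
def OmegaScrambled (A : Set (ℕ → Bool)) : Prop :=
  ∀ x ∈ A, ∀ y ∈ A, x ≠ y →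
    (omegaLimitShift x ∩ omegaLimitShift y).Nonempty ∧
    ¬ (omegaLimitShift x \ omegaLimitShift y).Countable ∧
    ∃ p ∈ omegaLimitShift x, ¬ ∃ m : ℕ, 1 ≤ m ∧ shiftMap^[m] p = p

open Function

namespace OmegaChaos

section Concatenation

variable {α : Type*}

/-- The infinite concatenation of the nonempty words `(w n).1 :: (w n).2`. -/
def concatSeq : (ℕ → α × List α) → ℕ → α
  | w, 0 => (w 0).1
  | w, i + 1 =>
    if h : i < (w 0).2.length then (w 0).2[i]
    else concatSeq (fun n => w (n + 1)) (i - (w 0).2.length)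
termination_by _ i => i

def blockStart (w : ℕ → α × List α) (p : ℕ) : ℕ :=
  ∑ n ∈ Finset.range p, ((w n).2.length + 1)

theorem concatSeq_zero (w : ℕ → α × List α) : concatSeq w 0 = (w 0).1 := by
  rw [concatSeq]

theorem concatSeq_succ_of_lt {w : ℕ → α × List α} {i : ℕ} (h : i < (w 0).2.length) :
    concatSeq w (i + 1) = (w 0).2[i] := by
  rw [concatSeq, dif_pos h]

theorem concatSeq_add_length_succ (w : ℕ → α × List α) (i : ℕ) :
    concatSeq w (i + ((w 0).2.length + 1)) = concatSeq (fun n => w (n + 1)) i := by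
  rw [← add_assoc, concatSeq, dif_neg (by omega), Nat.add_sub_cancel]

theorem concatSeq_blockStart_add (w : ℕ → α × List α) (p i : ℕ) :
    concatSeq w (blockStart w p + i) = concatSeq (fun n => w (n + p)) i := by
  induction p generalizing i with
  | zero => simp [blockStart]
  | succ p ih =>
    have hstart : blockStart w (p + 1) + i = blockStart w p + (i + ((w p).2.length + 1)) := by
      rw [blockStart, Finset.sum_range_succ, ← blockStart]
      ring
    rw [hstart, ih, show (w p).2.length = ((fun n => w (n + p)) 0).2.length by simp,
      concatSeq_add_length_succ]
    simp only [add_right_comm _ 1 p, add_assoc]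

theorem le_blockStart (w : ℕ → α × List α) (p : ℕ) : p ≤ blockStart w p :=
  calc p = ∑ _n ∈ Finset.range p, 1 := by simp
    _ ≤ blockStart w p := Finset.sum_le_sum fun _ _ => by omega

theorem concatSeq_congr {w w' : ℕ → α × List α} {i : ℕ} (h : ∀ n ≤ i, w n = w' n) :
    concatSeq w i = concatSeq w' i := by
  induction w, i using concatSeq.induct generalizing w' with
  | case1 w => rw [concatSeq_zero, concatSeq_zero, h 0 le_rfl]
  | case2 w i hi =>
    rw [concatSeq_succ_of_lt hi, concatSeq_succ_of_lt (h 0 (Nat.zero_le _) ▸ hi)]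
    simp only [h 0 (Nat.zero_le _)]
  | case3 w i hi ih =>
    rw [concatSeq, concatSeq, dif_neg hi, dif_neg (h 0 (Nat.zero_le _) ▸ hi),
      ← h 0 (Nat.zero_le _)]
    exact ih fun n hn => h (n + 1) (by omega)

theorem exists_concatSeq_eq (w : ℕ → α × List α) (i : ℕ) :
    ∃ n, concatSeq w i = (w n).1 ∨ concatSeq w i ∈ (w n).2 := by
  induction w, i using concatSeq.induct with
  | case1 w => exact ⟨0, .inl (concatSeq_zero w)⟩
  | case2 w i hi => exact ⟨0, .inr (concatSeq_succ_of_lt hi ▸ List.getElem_mem hi)⟩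
  | case3 w i hi ih =>
    obtain ⟨n, hn⟩ := ih
    rw [concatSeq, dif_neg hi]
    exact ⟨n + 1, hn⟩

end Concatenation

section Recurrence

variable {α : Type*}

def PrefixesRecur (x y : ℕ → α) : Prop :=
  ∀ ℓ N : ℕ, ∃ p, N ≤ p ∧ ∀ j < ℓ, x (p + j) = y j

theorem PrefixesRecur.shift {x y : ℕ → α} (h : PrefixesRecur x y) (m : ℕ) :
    PrefixesRecur x fun j => y (j + m) := by
  intro ℓ N
  obtain ⟨p, hp, hxy⟩ := h (ℓ + m) N
  exact ⟨p + m, by omega, fun j hj => by rw [add_assoc, add_comm m, hxy (j + m) (by omega)]⟩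

theorem prefixesRecur_congr_shift {x x' y : ℕ → α} {m : ℕ} (h : ∀ j, x' (m + j) = x j) :
    PrefixesRecur x' y ↔ PrefixesRecur x y := by
  constructor
  · intro h' ℓ N
    obtain ⟨p, hp, hxy⟩ := h' ℓ (N + m)
    refine ⟨p - m, by omega, fun j hj => ?_⟩
    rw [← h, ← hxy j hj]
    congr 1
    omega
  · intro h' ℓ N
    obtain ⟨p, hp, hxy⟩ := h' ℓ N
    exact ⟨m + p, by omega, fun j hj => by rw [add_assoc, h, hxy j hj]⟩

theorem PrefixesRecur.concatSeq {w w' : ℕ → α × List α} (h : PrefixesRecur w w') :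
    PrefixesRecur (concatSeq w) (concatSeq w') := by
  intro ℓ N
  obtain ⟨p, hp, hw⟩ := h ℓ N
  refine ⟨blockStart w p, hp.trans (le_blockStart w p), fun j hj => ?_⟩
  rw [concatSeq_blockStart_add]
  exact concatSeq_congr fun n hn => by rw [add_comm, hw n (by omega)]

end Recurrence

section OmegaLimit

theorem shiftMap_iterate_apply (x : ℕ → Bool) (i j : ℕ) : shiftMap^[i] x j = x (i + j) := by
  induction i generalizing x with
  | zero => simp
  | succ i ih => rw [iterate_succ_apply, ih, shiftMap, add_right_comm, add_assoc]

theorem mem_omegaLimitShift_iff {x y : ℕ → Bool} :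
    y ∈ omegaLimitShift x ↔ PrefixesRecur x y := by
  have hbasis := PiNat.isTopologicalBasis_cylinders fun _ : ℕ => Bool
  have hclosure : ∀ N, y ∈ closure {z | ∃ i, N ≤ i ∧ shiftMap^[i] x = z} ↔
      ∀ ℓ, ∃ p, N ≤ p ∧ ∀ j < ℓ, x (p + j) = y j := by
    intro N
    rw [hbasis.mem_closure_iff]
    constructor
    · intro h ℓ
      obtain ⟨_, hz, p, hp, rfl⟩ := h _ ⟨y, ℓ, rfl⟩ (PiNat.self_mem_cylinder y ℓ)
      exact ⟨p, hp, fun j hj => by rw [← shiftMap_iterate_apply x]; exact hz j hj⟩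
    · rintro h _ ⟨z, ℓ, rfl⟩ hy
      rw [← PiNat.mem_cylinder_iff_eq.1 hy]
      obtain ⟨p, hp, hxy⟩ := h ℓ
      exact ⟨_, fun j hj => by rw [shiftMap_iterate_apply, hxy j hj], p, hp, rfl⟩
  simp only [omegaLimitShift, Set.mem_iInter, hclosure]
  exact forall_comm

theorem not_periodic_of_eventually_false {x : ℕ → Bool} {n : ℕ} (hx : x ≠ fun _ => false)
    (hn : ∀ j, x (n + j) = false) : ¬ ∃ m : ℕ, 1 ≤ m ∧ shiftMap^[m] x = x := by
  rintro ⟨m, hm, hper⟩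
  obtain ⟨j, hj⟩ := Function.ne_iff.1 hx
  have hmn : shiftMap^[m * n] x = x := IsPeriodicPt.mul_const hper n
  have hle : n ≤ m * n := Nat.le_mul_of_pos_left n hm
  apply hj
  rw [← hmn, shiftMap_iterate_apply, ← Nat.add_sub_cancel' hle, add_assoc, hn]

end OmegaLimit

section RunLengthDecode

def runLengthDecode (μ : ℕ → ℕ) : ℕ → Bool :=
  concatSeq fun n => (false, List.replicate (μ n) true)

theorem runLengthDecode_zero (μ : ℕ → ℕ) : runLengthDecode μ 0 = false :=
  concatSeq_zero _

theorem runLengthDecode_succ_of_lt {μ : ℕ → ℕ} {i : ℕ} (h : i < μ 0) :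
    runLengthDecode μ (i + 1) = true := by
  rw [runLengthDecode, concatSeq_succ_of_lt (by simpa using h)]
  simp

theorem runLengthDecode_add (μ : ℕ → ℕ) (i : ℕ) :
    runLengthDecode μ (i + (μ 0 + 1)) = runLengthDecode (fun n => μ (n + 1)) i := by
  simpa [runLengthDecode] using
    concatSeq_add_length_succ (fun n => (false, List.replicate (μ n) true)) i

theorem runLengthDecode_const_zero : runLengthDecode (fun _ => 0) = fun _ => false := by
  funext i
  obtain ⟨n, hn | hn⟩ := exists_concatSeq_eq (fun _ => (false, List.replicate 0 true)) i
  · exact hn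
  · simp at hn

theorem eq_of_run_at_zero {μ : ℕ → ℕ} {c : ℕ} (hrun : ∀ j < c, runLengthDecode μ (j + 1) = true)
    (hend : runLengthDecode μ (c + 1) = false) : μ 0 = c := by
  by_contra hne
  rcases Nat.lt_or_gt_of_ne hne with h | h
  · have := hrun (μ 0) h
    rw [← zero_add (μ 0 + 1), runLengthDecode_add, runLengthDecode_zero] at this
    exact Bool.noConfusion this
  · rw [runLengthDecode_succ_of_lt h] at hend
    exact Bool.noConfusion hend

theorem exists_eq_of_run {μ : ℕ → ℕ} {i c : ℕ} (hstart : runLengthDecode μ i = false)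
    (hrun : ∀ j < c, runLengthDecode μ (i + 1 + j) = true)
    (hend : runLengthDecode μ (i + 1 + c) = false) : ∃ n, μ n = c := by
  induction i using Nat.strong_induction_on generalizing μ with
  | _ i ih =>
    rcases Nat.lt_or_ge (μ 0) i with hlt | hle
    · obtain ⟨i', rfl⟩ := Nat.exists_eq_add_of_lt hlt
      obtain ⟨n, hn⟩ := ih i' (by omega) (μ := fun n => μ (n + 1))
        (by rw [← runLengthDecode_add, ← hstart]; congr 1; omega)
        (fun j hj => by rw [← runLengthDecode_add, ← hrun j hj]; congr 1; omega)
        (by rw [← runLengthDecode_add, ← hend]; congr 1; omega)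
      exact ⟨n + 1, hn⟩
    · obtain rfl : i = 0 := by
        by_contra hi
        obtain ⟨i', rfl⟩ := Nat.exists_eq_succ_of_ne_zero hi
        rw [runLengthDecode_succ_of_lt (by omega)] at hstart
        exact Bool.noConfusion hstart
      exact ⟨0, eq_of_run_at_zero (fun j hj => by rw [add_comm j, ← hrun j hj])
        (by rwa [zero_add, add_comm] at hend)⟩

theorem runLengthDecode_injective : Injective runLengthDecode := by
  have head : ∀ {μ ν}, runLengthDecode μ = runLengthDecode ν → μ 0 = ν 0 := fun {μ _} h =>
    (eq_of_run_at_zero (fun j hj => h ▸ runLengthDecode_succ_of_lt hj)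
      (by rw [← h, ← zero_add (μ 0 + 1), runLengthDecode_add, runLengthDecode_zero])).symm
  intro μ ν h
  funext n
  induction n generalizing μ ν with
  | zero => exact head h
  | succ n ih =>
    refine ih (μ := fun k => μ (k + 1)) (ν := fun k => ν (k + 1)) (funext fun i => ?_)
    rw [← runLengthDecode_add, ← runLengthDecode_add, h, head h]

theorem PrefixesRecur.runLengthDecode {μ ν : ℕ → ℕ} (h : PrefixesRecur μ ν) :
    PrefixesRecur (runLengthDecode μ) (runLengthDecode ν) :=
  PrefixesRecur.concatSeq fun ℓ N =>
    (h ℓ N).imp fun _ ⟨hp, hμν⟩ => ⟨hp, fun j hj => by rw [hμν j hj]⟩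

theorem mem_range_of_runLengthDecode_mem_omegaLimitShift {μ ν : ℕ → ℕ}
    (h : runLengthDecode ν ∈ omegaLimitShift (runLengthDecode μ)) : ν 0 ∈ Set.range μ := by
  obtain ⟨i, -, hi⟩ := mem_omegaLimitShift_iff.1 h (ν 0 + 2) 0
  refine exists_eq_of_run (i := i) ?_ (fun j hj => ?_) ?_
  · simpa [runLengthDecode_zero] using hi 0 (by omega)
  · rw [add_assoc, hi _ (by omega), add_comm, runLengthDecode_succ_of_lt hj]
  · rw [add_assoc, hi _ (by omega), add_comm, ← zero_add (ν 0 + 1), runLengthDecode_add,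
      runLengthDecode_zero]

end RunLengthDecode

section Construction

def runLength (s : ℕ → Bool) (k : ℕ) : ℕ := 2 * k + (s k).toNat + 2

theorem runLength_ne {s t : ℕ → Bool} {k : ℕ} (h : s k ≠ t k) (j : ℕ) :
    runLength s k ≠ runLength t j := by
  intro heq
  have := Bool.toNat_le (s k)
  have := Bool.toNat_le (t j)
  obtain rfl : k = j := by unfold runLength at heq; omega
  exact h ((by decide : Injective Bool.toNat) (by unfold runLength at heq; omega))

/-- Decoding only the first coordinate of `Nat.unpair n` makes every block occur for infinitely
many `n`. -/
def wordSeq (s : ℕ → Bool) (n : ℕ) : ℕ × List ℕ :=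
  let kb := (Encodable.decode (α := ℕ × List Bool) n.unpair.1).getD (0, [])
  (runLength s kb.1, kb.2.map Bool.toNat)

def runLengths (s : ℕ → Bool) : ℕ → ℕ := concatSeq (wordSeq s)

def bitRuns (c : ℕ) (a : ℕ → Bool) : ℕ → ℕ
  | 0 => c
  | n + 1 => (a n).toNat

@[simp]
theorem bitRuns_zero (c : ℕ) (a : ℕ → Bool) : bitRuns c a 0 = c := rfl

theorem runLengths_le_one_or_eq (s : ℕ → Bool) (i : ℕ) :
    runLengths s i ≤ 1 ∨ ∃ k, runLengths s i = runLength s k := by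
  obtain ⟨n, hn | hn⟩ := exists_concatSeq_eq (wordSeq s) i
  · exact .inr ⟨_, hn⟩
  · obtain ⟨b, -, hb⟩ := List.mem_map.1 hn
    exact .inl (by rw [runLengths, ← hb]; exact Bool.toNat_le b)

theorem prefixesRecur_runLengths (s : ℕ → Bool) (k : ℕ) (a : ℕ → Bool) :
    PrefixesRecur (runLengths s) (bitRuns (runLength s k) a) := by
  intro ℓ N
  let b := List.ofFn fun j : Fin ℓ => a j
  let p := Nat.pair (Encodable.encode (k, b)) N
  have hw : wordSeq s p = (runLength s k, b.map Bool.toNat) := by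
    simp [wordSeq, p, Encodable.encodek]
  refine ⟨blockStart (wordSeq s) p, (Nat.right_le_pair _ _).trans (le_blockStart _ _),
    fun j hj => ?_⟩
  rw [runLengths, concatSeq_blockStart_add]
  cases j with
  | zero => simp [concatSeq_zero, hw, bitRuns]
  | succ j =>
    have hj' : j < ((fun n => wordSeq s (n + p)) 0).2.length := by simp [hw, b]; omega
    rw [concatSeq_succ_of_lt hj']
    simp [hw, b, bitRuns]

def scrambledPoint (s : ℕ → Bool) : ℕ → Bool := runLengthDecode (runLengths s)

theorem runLengthDecode_bitRuns_mem (s : ℕ → Bool) (k : ℕ) (a : ℕ → Bool) :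
    runLengthDecode (bitRuns (runLength s k) a) ∈ omegaLimitShift (scrambledPoint s) :=
  mem_omegaLimitShift_iff.2 (prefixesRecur_runLengths s k a).runLengthDecode

theorem runLengthDecode_bitRuns_not_mem {s t : ℕ → Bool} {k : ℕ} (h : s k ≠ t k) (a : ℕ → Bool) :
    runLengthDecode (bitRuns (runLength s k) a) ∉ omegaLimitShift (scrambledPoint t) := by
  intro hmem
  obtain ⟨i, hi⟩ := mem_range_of_runLengthDecode_mem_omegaLimitShift hmem
  rcases runLengths_le_one_or_eq t i with hle | ⟨j, hj⟩
  · rw [hi, bitRuns_zero] at hle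
    unfold runLength at hle
    omega
  · exact runLength_ne h j (hi.symm.trans hj)

theorem const_false_mem_omegaLimitShift (s : ℕ → Bool) :
    (fun _ => false) ∈ omegaLimitShift (scrambledPoint s) := by
  rw [← runLengthDecode_const_zero]
  exact mem_omegaLimitShift_iff.2
    ((prefixesRecur_runLengths s 0 fun _ => false).shift 1).runLengthDecode

theorem not_periodic_runLengthDecode_bitRuns {c : ℕ} (hc : 0 < c) :
    ¬ ∃ m : ℕ, 1 ≤ m ∧ shiftMap^[m] (runLengthDecode (bitRuns c fun _ => false)) =
      runLengthDecode (bitRuns c fun _ => false) := by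
  refine not_periodic_of_eventually_false (n := c + 1) (fun h => ?_) fun j => ?_
  · exact Bool.noConfusion ((runLengthDecode_succ_of_lt hc).symm.trans (congrFun h 1))
  · rw [add_comm]
    exact (runLengthDecode_add _ j).trans (congrFun runLengthDecode_const_zero j)

theorem bitRuns_injective (c : ℕ) : Injective (bitRuns c) := fun a b h =>
  funext fun n => (by decide : Injective Bool.toNat) (congrFun h (n + 1))

instance : Uncountable (ℕ → Bool) := by
  rw [← Cardinal.aleph0_lt_mk_iff, ← Cardinal.power_def]
  simpa using Cardinal.cantor Cardinal.aleph0

theorem not_countable_of_injective {β : Type*} {A : Set β} {f : (ℕ → Bool) → β}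
    (hf : Injective f) (hA : ∀ a, f a ∈ A) : ¬ A.Countable := fun h =>
  Set.not_countable_univ ((h.preimage hf).mono fun a _ => hA a)

theorem omegaLimitShift_diff_not_countable {s t : ℕ → Bool} (h : s ≠ t) :
    ¬ (omegaLimitShift (scrambledPoint s) \ omegaLimitShift (scrambledPoint t)).Countable := by
  obtain ⟨k, hk⟩ := Function.ne_iff.1 h
  exact not_countable_of_injective (runLengthDecode_injective.comp (bitRuns_injective _))
    fun a => ⟨runLengthDecode_bitRuns_mem s k a, runLengthDecode_bitRuns_not_mem hk a⟩

end Construction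

def prependPrefix (y : ℕ → Bool) (m : ℕ) (x : ℕ → Bool) : ℕ → Bool :=
  fun j => if j < m then y j else x (j - m)

theorem prependPrefix_mem_cylinder (y : ℕ → Bool) (m : ℕ) (x : ℕ → Bool) :
    prependPrefix y m x ∈ PiNat.cylinder y m :=
  fun _ hj => if_pos hj

theorem omegaLimitShift_prependPrefix (y : ℕ → Bool) (m : ℕ) (x : ℕ → Bool) :
    omegaLimitShift (prependPrefix y m x) = omegaLimitShift x := by
  ext z
  simp only [mem_omegaLimitShift_iff]
  exact prefixesRecur_congr_shift (m := m) fun j => by simp [prependPrefix]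

end OmegaChaos

open OmegaChaos

theorem full_shift_dense_omega_chaos :
    ∀ U : Set (ℕ → Bool), IsOpen U → U.Nonempty →
      ∃ A ⊆ U, ¬ A.Countable ∧ OmegaScrambled A := by
  intro U hU ⟨y, hy⟩
  obtain ⟨_, ⟨z, m, rfl⟩, -, hzU⟩ :=
    (PiNat.isTopologicalBasis_cylinders _).exists_subset_of_mem_open hy hU
  let F s := prependPrefix z m (scrambledPoint s)
  have hω s : omegaLimitShift (F s) = omegaLimitShift (scrambledPoint s) :=
    omegaLimitShift_prependPrefix z m _
  have hdiff {s t} (h : s ≠ t) : ¬ (omegaLimitShift (F s) \ omegaLimitShift (F t)).Countable := by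
    rw [hω, hω]
    exact omegaLimitShift_diff_not_countable h
  have hF : Injective F := fun s t h => by_contra fun hst =>
    hdiff hst (by rw [h, Set.sdiff_self]; exact Set.countable_empty)
  refine ⟨Set.range F, Set.range_subset_iff.2 fun s => hzU (prependPrefix_mem_cylinder z m _),
    not_countable_of_injective hF Set.mem_range_self, ?_⟩
  rintro _ ⟨s, rfl⟩ _ ⟨t, rfl⟩ hst
  refine ⟨?_, hdiff (ne_of_apply_ne F hst), ?_⟩
  · rw [hω, hω]
    exact ⟨_, const_false_mem_omegaLimitShift s, const_false_mem_omegaLimitShift t⟩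
  · rw [hω]
    exact ⟨_, runLengthDecode_bitRuns_mem s 0 _, not_periodic_runLengthDecode_bitRuns (by
      unfold runLength; omega)⟩
end
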